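/- Let w be a binary word and let [a..b] be a maximal block of equal letters in w, i.e., w[a] = w[a+1] = ⋯ = w[b], a = 1 or w[a−1] ≠ w[a], and b = |w| or w[b+1] ≠ w[b]. Then every position i with a < i < b is a lost position of w. -/

import Mathlib

/-- The factor `w[i..j]` of `w`, with 1-based inclusive indices. -/
def factor (w : List Bool) (i j : ℕ) : List Bool :=
  (w.drop (i - 1)).take (j + 1 - i)

/-- `p` is a period of `w` (1-based: `w[k+p] = w[k]` for `1 ≤ k ≤ |w| - p`). -/
def IsPeriod (w : List Bool) (p : ℕ) : Prop :=
  1 ≤ p ∧ ∀ k, k + p < w.length → w[k]? = w[(k + p)]?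

/-- The least period of `w`. -/
noncomputable def leastPeriod (w : List Bool) : ℕ := sInf {p | IsPeriod w p}

/-- `p` is the least period of `w`. -/
def IsLeastPeriod (w : List Bool) (p : ℕ) : Prop :=
  IsPeriod w p ∧ ∀ q, IsPeriod w q → p ≤ q

/-- The lexicographic order `≺_c` on binary words in which the letter `c` is smaller. -/
def LexLt (c : Bool) : List Bool → List Bool → Prop :=
  List.Lex (fun a b => a = c ∧ b = !c)

/-- `w` is a `≺_c`-Lyndon word. -/
def IsLyndon (c : Bool) (w : List Bool) : Prop :=
  w ≠ [] ∧ ∀ u v : List Bool, u ≠ [] → v ≠ [] → w = u ++ v →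
    w ≠ v ++ u ∧ LexLt c w (v ++ u)

/-- `w` is primitive: it is not a power of a shorter word. -/
def Primitive (w : List Bool) : Prop :=
  w ≠ [] ∧ ∀ (u : List Bool) (k : ℕ), u.length < w.length → w ≠ (List.replicate k u).flatten

/-- `w` and `w'` are conjugate words. -/
def Conjugate (w w' : List Bool) : Prop := ∃ u v, w = u ++ v ∧ w' = v ++ u

/-- The interval `[i..j]` (1-based) is a run of `w`. -/
def IsRun (w : List Bool) (i j : ℕ) : Prop :=
  1 ≤ i ∧ i < j ∧ j ≤ w.length ∧
  2 * leastPeriod (factor w i j) ≤ j - i + 1 ∧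
  (i = 1 ∨ w[(i - 2)]? ≠ w[(i - 2 + leastPeriod (factor w i j))]?) ∧
  (j = w.length ∨ w[j]? ≠ w[(j - leastPeriod (factor w i j))]?)

/-- `c_w(i)`: the letter different from `w[i-1]` (1-based). -/
def cpar (w : List Bool) (i : ℕ) : Bool := !(w.getD (i - 2) false)

/-- `L_w(i)`: the largest `j` such that `w[i..j]` is `≺_{c_w(i)}`-Lyndon. -/
noncomputable def Lpar (w : List Bool) (i : ℕ) : ℕ :=
  sSup {j | j ≤ w.length ∧ IsLyndon (cpar w i) (factor w i j)}

/-- `D_w(i) = L_w(i) - i + 1`. -/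
noncomputable def Dpar (w : List Bool) (i : ℕ) : ℕ := Lpar w i + 1 - i

/-- `ST_w(i)`: the least `j` such that `D_w(i)` is a period of `w[j..L_w(i)]`. -/
noncomputable def STpar (w : List Bool) (i : ℕ) : ℕ :=
  sInf {j | 1 ≤ j ∧ IsPeriod (factor w j (Lpar w i)) (Dpar w i)}

/-- `E_w(i)`: the largest `j` such that `D_w(i)` is a period of `w[i..j]`. -/
noncomputable def Epar (w : List Bool) (i : ℕ) : ℕ :=
  sSup {j | j ≤ w.length ∧ IsPeriod (factor w i j) (Dpar w i)}

/-- `R_w(i) = [ST_w(i)..E_w(i)]`. -/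
noncomputable def Rmap (w : List Bool) (i : ℕ) : ℕ × ℕ := (STpar w i, Epar w i)

/-- `r_w(c)` for the run `[s..e]`: the least `i` with `R_w(i) = [s..e]` and
`w[i..L_w(i)]` a `≺_c`-Lyndon word. -/
noncomputable def rpar (w : List Bool) (s e : ℕ) (c : Bool) : ℕ :=
  sInf {i | Rmap w i = (s, e) ∧ IsLyndon c (factor w i (Lpar w i))}

/-- `f_w([s..e])`: the letter `c` with `r_w(c) ≥ r_w(c̄)` (`0` if the least period is one). -/
noncomputable def fpar (w : List Bool) (s e : ℕ) : Bool :=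
  if leastPeriod (factor w s e) = 1 then false
  else if rpar w s e false ≤ rpar w s e true then true else false

/-- The position `i` (1-based, `1 < i ≤ |w|`) is lost in `w`. -/
def Lost (w : List Bool) (i : ℕ) : Prop :=
  1 < i ∧ i ≤ w.length ∧
  ((Epar w i < w.length ∧ 1 < STpar w i ∧ ¬ IsRun w (STpar w i) (Epar w i)) ∨
   (Epar w i < w.length ∧ IsRun w (STpar w i) (Epar w i) ∧ i + Dpar w i ≤ Epar w i) ∨
   (Epar w i = w.length ∧ IsRun w (STpar w i) (Epar w i) ∧ i + Dpar w i ≤ Epar w i ∧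
     STpar w i < i ∧
     IsLyndon (fpar w (STpar w i) (Epar w i)) (factor w i (Lpar w i))))

/-- The number of lost positions of `w` that are `≤ p`. -/
noncomputable def lostCount (w : List Bool) (p : ℕ) : ℕ := {q | Lost w q ∧ q ≤ p}.ncard

/-- The prefix-frequency predicate `P_d(w)`: every lost position `p` of `w`, being the
`j`-th lost position, satisfies `p - 1 ≥ j·d`. -/
def Pd (d : ℝ) (w : List Bool) : Prop :=
  ∀ p, Lost w p → (lostCount w p : ℝ) * d ≤ (p : ℝ) - 1

/-- The number of runs of `w`. -/
noncomputable def numRuns (w : List Bool) : ℕ := {ij : ℕ × ℕ | IsRun w ij.1 ij.2}.ncard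

/-- `ρ(n)`: the maximal number of runs in a binary word of length `n`. -/
noncomputable def rho (n : ℕ) : ℕ := sSup {k | ∃ w : List Bool, w.length = n ∧ numRuns w = k}

/-- The golden ratio. -/
noncomputable def goldenRatio' : ℝ := (1 + Real.sqrt 5) / 2

/-! Around an inner position `i` of a block of `x`s we have `c_w(i) = !x`, and every factor
`w[i..j]` with `j > i` begins with the larger letter `x`, so it is not `≺_{!x}`-Lyndon. Hence
`L_w(i) = i` and `D_w(i) = 1`: the period-one extension `R_w(i)` is the block itself, which is a
run of period one containing `i + 1`, so clause (ii) or (iii) of lostness applies. -/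

/-- The letters of `w` at the 1-based positions `s, …, e` all equal `w[s]`. -/
def IsConstantOn (w : List Bool) (s e : ℕ) : Prop :=
  ∀ m, s ≤ m → m ≤ e → w[m - 1]? = w[s - 1]?

theorem IsConstantOn.mono {w : List Bool} {a b s e : ℕ} (h : IsConstantOn w a b)
    (has : a ≤ s) (hse : s ≤ e) (heb : e ≤ b) : IsConstantOn w s e := fun m hsm hme =>
  (h m (has.trans hsm) (hme.trans heb)).trans (h s has (hse.trans heb)).symm

theorem factor_getElem? (w : List Bool) (i j k : ℕ) (h : k < j + 1 - i) :
    (factor w i j)[k]? = w[i - 1 + k]? := by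
  rw [factor, List.getElem?_take_of_lt h, List.getElem?_drop]

theorem length_factor (w : List Bool) (i j : ℕ) :
    (factor w i j).length = min (j + 1 - i) (w.length - (i - 1)) := by
  rw [factor, List.length_take, List.length_drop]

theorem factor_self {w : List Bool} {i : ℕ} {x : Bool} (h : w[i - 1]? = some x) :
    factor w i i = [x] := by
  obtain ⟨t, ht⟩ : ∃ t, w.drop (i - 1) = x :: t := by
    rcases hd : w.drop (i - 1) with _ | ⟨y, t⟩
    · simp_all
    · have : (w.drop (i - 1))[0]? = some x := by simpa [List.getElem?_drop] using h
      simp_all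
  simp [factor, ht]

theorem isLyndon_singleton (c x : Bool) : IsLyndon c [x] := by
  refine ⟨List.cons_ne_nil x [], fun u v hu hv huv => absurd (congrArg List.length huv) ?_⟩
  simp only [List.length_singleton, List.length_append]
  have := List.length_pos_iff.2 hu
  have := List.length_pos_iff.2 hv
  omega

/-- A word of length at least two that begins with the larger letter `x` of `≺_{!x}` is not
Lyndon: either it is a power of `x`, or its rotation starting at an occurrence of `!x` is
smaller. -/
theorem not_isLyndon_cons (x : Bool) {t : List Bool} (ht : t ≠ []) :
    ¬ IsLyndon (!x) (x :: t) := by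
  rintro ⟨-, hL⟩
  by_cases hall : ∀ z ∈ t, z = x
  · apply (hL [x] t (List.cons_ne_nil x []) ht rfl).1
    rw [List.eq_replicate_length.2 hall, ← List.replicate_succ', List.replicate_succ]
  · obtain ⟨z, hz, hzx⟩ := not_forall₂.1 hall
    obtain rfl : z = !x := by cases z <;> cases x <;> simp_all
    obtain ⟨t₁, t₂, rfl⟩ := List.mem_iff_append.1 hz
    have hlex := (hL (x :: t₁) ((!x) :: t₂) (List.cons_ne_nil _ _) (List.cons_ne_nil _ _)
      (by simp)).2
    cases x <;> cases hlex with | rel h => simp at h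

theorem IsConstantOn.isPeriod_factor_one {w : List Bool} {s e : ℕ} (hs : 1 ≤ s)
    (h : IsConstantOn w s e) : IsPeriod (factor w s e) 1 := by
  refine ⟨le_rfl, fun k hk => ?_⟩
  have hk' : k + 1 < e + 1 - s := hk.trans_le ((length_factor w s e).le.trans (min_le_left _ _))
  rw [factor_getElem? w s e k (by omega), factor_getElem? w s e (k + 1) hk',
    show s - 1 + k = (s + k) - 1 by omega, show s - 1 + (k + 1) = (s + k + 1) - 1 by omega,
    h (s + k) (by omega) (by omega), h (s + k + 1) (by omega) (by omega)]

theorem leastPeriod_eq_one {u : List Bool} (h : IsPeriod u 1) : leastPeriod u = 1 :=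
  IsLeast.csInf_eq ⟨h, fun _ hp => hp.1⟩

theorem Lpar_eq_self {w : List Bool} {i : ℕ} (hi : 2 ≤ i) (hiw : i ≤ w.length)
    (hrep : w[i - 2]? = w[i - 1]?) : Lpar w i = i := by
  obtain ⟨x, hx⟩ : ∃ x, w[i - 1]? = some x := ⟨w[i - 1], List.getElem?_eq_getElem _⟩
  have hc : cpar w i = !x := by
    simp only [cpar, List.getD_eq_getElem?_getD, hrep, hx, Option.getD_some]
  refine IsGreatest.csSup_eq ⟨⟨hiw, ?_⟩, fun j ⟨hjw, hLyn⟩ => ?_⟩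
  · rw [factor_self hx]
    exact isLyndon_singleton _ _
  · by_contra! hij
    have hlen : 2 ≤ (factor w i j).length := by rw [length_factor]; omega
    have hhead := factor_getElem? w i j 0 (by omega)
    rw [hc] at hLyn
    rcases hf : factor w i j with _ | ⟨y, t⟩
    · simp [hf] at hlen
    · obtain rfl : y = x := by simpa [hf, hx] using hhead
      rw [hf] at hLyn
      exact not_isLyndon_cons y (by rintro rfl; simp [hf] at hlen) hLyn

theorem Dpar_eq_one {w : List Bool} {i : ℕ} (hi : 2 ≤ i) (hiw : i ≤ w.length)
    (hrep : w[i - 2]? = w[i - 1]?) : Dpar w i = 1 := by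
  rw [Dpar, Lpar_eq_self hi hiw hrep]
  omega

theorem STpar_eq {w : List Bool} {a i : ℕ} (ha : 1 ≤ a) (hai : a ≤ i) (hiw : i ≤ w.length)
    (hconst : IsConstantOn w a i) (hleft : a = 1 ∨ w[a - 2]? ≠ w[a - 1]?)
    (hL : Lpar w i = i) (hD : Dpar w i = 1) : STpar w i = a := by
  rw [STpar, hL, hD]
  refine IsLeast.csInf_eq ⟨⟨ha, hconst.isPeriod_factor_one ha⟩, fun j ⟨hj, hjp⟩ => ?_⟩
  by_contra! hja
  refine hleft.resolve_left (by omega) ?_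
  have h := hjp.2 (a - 1 - j) (by rw [length_factor]; omega)
  rwa [factor_getElem? w j i _ (by omega), factor_getElem? w j i _ (by omega),
    show j - 1 + (a - 1 - j) = a - 2 by omega,
    show j - 1 + (a - 1 - j + 1) = a - 1 by omega] at h

theorem Epar_eq {w : List Bool} {i b : ℕ} (hi : 1 ≤ i) (hib : i ≤ b) (hb : b ≤ w.length)
    (hconst : IsConstantOn w i b) (hright : b = w.length ∨ w[b]? ≠ w[b - 1]?)
    (hD : Dpar w i = 1) : Epar w i = b := by
  rw [Epar, hD]
  refine IsGreatest.csSup_eq ⟨⟨hb, hconst.isPeriod_factor_one hi⟩, fun j ⟨hjw, hjp⟩ => ?_⟩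
  by_contra! hbj
  refine hright.resolve_left (by omega) ?_
  have h := hjp.2 (b - i) (by rw [length_factor]; omega)
  rw [factor_getElem? w i j _ (by omega), factor_getElem? w i j _ (by omega),
    show i - 1 + (b - i) = b - 1 by omega, show i - 1 + (b - i + 1) = b by omega] at h
  exact h.symm

theorem isRun_of_isConstantOn {w : List Bool} {a b : ℕ} (ha : 1 ≤ a) (hab : a < b)
    (hb : b ≤ w.length) (hconst : IsConstantOn w a b)
    (hleft : a = 1 ∨ w[a - 2]? ≠ w[a - 1]?) (hright : b = w.length ∨ w[b]? ≠ w[b - 1]?) :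
    IsRun w a b := by
  have hlp := leastPeriod_eq_one (hconst.isPeriod_factor_one ha)
  refine ⟨ha, hab, hb, by omega, ?_, by rwa [hlp]⟩
  rw [hlp]
  rcases Nat.lt_or_ge 1 a with h1 | h1
  · rwa [show a - 2 + 1 = a - 1 by omega]
  · exact Or.inl (by omega)

/-- Every inner position of a maximal block of equal letters is lost. -/
theorem inner_block_positions_lost (w : List Bool) (a b : ℕ)
    (ha : 1 ≤ a) (hb : b ≤ w.length)
    (hblock : ∀ m, a ≤ m → m ≤ b → w[(m - 1)]? = w[(a - 1)]?)
    (hleft : a = 1 ∨ w[(a - 2)]? ≠ w[(a - 1)]?)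
    (hright : b = w.length ∨ w[b]? ≠ w[(b - 1)]?) :
    ∀ i, a < i → i < b → Lost w i := by
  intro i hai hib
  have hconst : IsConstantOn w a b := hblock
  have hrep : w[i - 2]? = w[i - 1]? := by
    rw [show i - 2 = i - 1 - 1 by omega, hconst (i - 1) (by omega) (by omega),
      hconst i hai.le hib.le]
  have hL := Lpar_eq_self (by omega) (by omega) hrep
  have hD := Dpar_eq_one (by omega) (by omega) hrep
  have hST := STpar_eq ha hai.le (by omega) (hconst.mono le_rfl hai.le hib.le) hleft hL hD
  have hE := Epar_eq (by omega) hib.le hb (hconst.mono hai.le hib.le le_rfl) hright hD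
  have hrun := isRun_of_isConstantOn ha (hai.trans hib) hb hconst hleft hright
  refine ⟨by omega, by omega, ?_⟩
  rw [hST, hE, hD]
  rcases hb.eq_or_lt with hbw | hbw
  · rw [hL, factor_self (List.getElem?_eq_getElem (by omega : i - 1 < w.length))]
    exact Or.inr (Or.inr ⟨hbw, hrun, by omega, by omega, isLyndon_singleton _ _⟩)
  · exact Or.inr (Or.inl ⟨hbw, hrun, by omega⟩)
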